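/- arXiv:1204.3700 — 3 statements merged into one kernel-verified Lean document; each statement's English description precedes it below -/
import Mathlib

section
/- Let A ∈ ℝ^{n×N} have full row rank (AA* invertible) and let T ⊆ {1,…,N} with |T| = s be such that A_T* A_T is invertible. Suppose the sequence {x^k} follows the NST+HT+FB iteration and that T_k = T for all k ≥ j for some integer j. Then x^{j+1} = x^{j+2} = … = x^‡, where x^‡_T = x^j_T + [ (A_T* A_T)^{-1} A_T* + A_T* (AA*)^{-1} ( I − A_T (A_T* A_T)^{-1} A_T* ) ] A_{T^c} x^j_{T^c} and x^‡_{T^c} = A_{T^c}* (AA*)^{-1} ( I − A_T (A_T* A_T)^{-1} A_T* ) A_{T^c} x^j_{T^c}. -/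
open Matrix Finset Filter Topology

/-- Euclidean norm of a vector. -/
noncomputable def enorm {k : ℕ} (x : Fin k → ℝ) : ℝ := Real.sqrt (∑ i, x i ^ 2)

/-- `x` has at most `s` nonzero entries. -/
def IsSparse {k : ℕ} (s : ℕ) (x : Fin k → ℝ) : Prop :=
  (Finset.univ.filter fun i => x i ≠ 0).card ≤ s

/-- Spectral norm (ℓ²-operator norm) of a matrix. -/
noncomputable def specNorm {m k : Type*} [Fintype m] [Fintype k] [DecidableEq k]
    (M : Matrix m k ℝ) : ℝ :=
  ‖LinearMap.toContinuousLinearMap (Matrix.toEuclideanLin M)‖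

/-- `cols A T` is the submatrix of `A` consisting of the columns indexed by `T`. -/
def cols {n N : ℕ} (A : Matrix (Fin n) (Fin N) ℝ) (T : Finset (Fin N)) :
    Matrix (Fin n) {i : Fin N // i ∈ T} ℝ := Matrix.of fun r c => A r c.1

/-- `subv x T` is the subvector of `x` consisting of the entries indexed by `T`. -/
def subv {N : ℕ} (x : Fin N → ℝ) (T : Finset (Fin N)) : {i : Fin N // i ∈ T} → ℝ :=
  fun i => x i.1

/-- The feedback term `(A_T* A_T)⁻¹ A_T* A_{Tᶜ} x_{Tᶜ}`. -/
noncomputable def fb {n N : ℕ} (A : Matrix (Fin n) (Fin N) ℝ) (T : Finset (Fin N))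
    (x : Fin N → ℝ) : {i : Fin N // i ∈ T} → ℝ :=
  ((cols A T)ᵀ * cols A T)⁻¹ *ᵥ ((cols A T)ᵀ *ᵥ (cols A Tᶜ *ᵥ subv x Tᶜ))

section Aux

variable {n N : ℕ} (A : Matrix (Fin n) (Fin N) ℝ) (T : Finset (Fin N))

/-- Splitting `A *ᵥ v` along columns in `T` and `Tᶜ`. -/
lemma mulVec_split (v : Fin N → ℝ) :
    A *ᵥ v = cols A T *ᵥ subv v T + cols A Tᶜ *ᵥ subv v Tᶜ := by
  funext r
  simp only [Matrix.mulVec, dotProduct, cols, subv, Pi.add_apply, Matrix.of_apply]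
  rw [Finset.sum_coe_sort T (fun i => A r i * v i),
    Finset.sum_coe_sort Tᶜ (fun i => A r i * v i),
    Finset.sum_add_sum_compl T (fun i => A r i * v i)]

/-- Splitting the Gram matrix along columns in `T` and `Tᶜ`. -/
lemma gram_split :
    A * Aᵀ = cols A T * (cols A T)ᵀ + cols A Tᶜ * (cols A Tᶜ)ᵀ := by
  ext r t
  simp only [Matrix.mul_apply, Matrix.add_apply, cols, Matrix.transpose_apply, Matrix.of_apply]
  rw [Finset.sum_coe_sort T (fun i => A r i * A t i),
    Finset.sum_coe_sort Tᶜ (fun i => A r i * A t i),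
    Finset.sum_add_sum_compl T (fun i => A r i * A t i)]

lemma subv_transpose_mulVec (w : Fin n → ℝ) :
    subv (Aᵀ *ᵥ w) T = (cols A T)ᵀ *ᵥ w := rfl

lemma subv_add (a b : Fin N → ℝ) : subv (a + b) T = subv a T + subv b T := rfl

lemma subv_sub (a b : Fin N → ℝ) : subv (a - b) T = subv a T - subv b T := rfl

/-- Two vectors agreeing on `T` and on `Tᶜ` are equal. -/
lemma eq_of_subv_eq (a b : Fin N → ℝ) (h1 : subv a T = subv b T)
    (h2 : subv a Tᶜ = subv b Tᶜ) : a = b := by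
  funext i
  by_cases hi : i ∈ T
  · exact congrFun h1 ⟨i, hi⟩
  · exact congrFun h2 ⟨i, Finset.mem_compl.mpr hi⟩

end Aux

/-- NST+HT+FB is stationary once the support stabilizes. -/
theorem stmt_2 {n N s : ℕ} (hnN : n < N) (A : Matrix (Fin n) (Fin N) ℝ)
    (hfull : IsUnit (A * Aᵀ))
    (T : Finset (Fin N)) (hTcard : T.card = s)
    (hgram : IsUnit ((cols A T)ᵀ * cols A T))
    (x u : ℕ → Fin N → ℝ) (Tk : ℕ → Finset (Fin N))
    (hTkcard : ∀ k, (Tk k).card = s)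
    (hTkmax : ∀ k, ∀ i ∈ Tk k, ∀ j ∉ Tk k, |x k j| ≤ |x k i|)
    (hu1 : ∀ k, ∀ i, ∀ hi : i ∈ Tk k, u k i = x k i + fb A (Tk k) (x k) ⟨i, hi⟩)
    (hu2 : ∀ k, ∀ i ∉ Tk k, u k i = 0)
    (hx : ∀ k, x (k+1) = x k + (1 - Aᵀ * (A * Aᵀ)⁻¹ * A) *ᵥ (u k - x k))
    (j : ℕ) (hT : ∀ k, j ≤ k → Tk k = T) :
    ∀ k, j + 1 ≤ k → x k = fun i =>
      if hi : i ∈ T then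
        x j i + (((((cols A T)ᵀ * cols A T)⁻¹ * (cols A T)ᵀ +
            (cols A T)ᵀ * (A * Aᵀ)⁻¹ *
              ((1 : Matrix (Fin n) (Fin n) ℝ) -
                cols A T * ((cols A T)ᵀ * cols A T)⁻¹ * (cols A T)ᵀ)) *
          cols A Tᶜ) *ᵥ subv (x j) Tᶜ) ⟨i, hi⟩
      else
        ((((cols A Tᶜ)ᵀ * (A * Aᵀ)⁻¹ *
            ((1 : Matrix (Fin n) (Fin n) ℝ) -
              cols A T * ((cols A T)ᵀ * cols A T)⁻¹ * (cols A T)ᵀ)) *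
          cols A Tᶜ) *ᵥ subv (x j) Tᶜ) ⟨i, Finset.mem_compl.mpr hi⟩ := by
  classical
  set B := cols A T with hB
  set C := cols A Tᶜ with hC
  set G := Bᵀ * B with hGdef
  set M := A * Aᵀ with hMdef
  set Q : Matrix (Fin n) (Fin n) ℝ := 1 - B * G⁻¹ * Bᵀ with hQdef
  set E : Matrix {i : Fin N // i ∈ T} (Fin n) ℝ := G⁻¹ * Bᵀ + Bᵀ * M⁻¹ * Q with hEdef
  set F : Matrix {i : Fin N // i ∈ Tᶜ} (Fin n) ℝ := Cᵀ * M⁻¹ * Q with hFdef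
  have hGG : G * G⁻¹ = 1 := Matrix.mul_nonsing_inv G ((Matrix.isUnit_iff_isUnit_det G).mp hgram)
  have hGG' : G⁻¹ * G = 1 := Matrix.nonsing_inv_mul G ((Matrix.isUnit_iff_isUnit_det G).mp hgram)
  have hMM : M * M⁻¹ = 1 := Matrix.mul_nonsing_inv M ((Matrix.isUnit_iff_isUnit_det M).mp hfull)
  have hMM' : M⁻¹ * M = 1 := Matrix.nonsing_inv_mul M ((Matrix.isUnit_iff_isUnit_det M).mp hfull)
  have hsplit : M = B * Bᵀ + C * Cᵀ := gram_split A T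
  have hfb : ∀ y : Fin N → ℝ, fb A T y = (G⁻¹ * Bᵀ * C) *ᵥ subv y Tᶜ := by
    intro y
    show G⁻¹ *ᵥ (Bᵀ *ᵥ (C *ᵥ subv y Tᶜ)) = _
    rw [Matrix.mulVec_mulVec, Matrix.mulVec_mulVec]
  clear_value E F
  clear_value G M Q
  have hBQ : Bᵀ * Q = 0 := by
    rw [hQdef, Matrix.mul_sub, Matrix.mul_one, ← Matrix.mul_assoc, ← Matrix.mul_assoc,
      ← hGdef, hGG, Matrix.one_mul, sub_self]
  have hQB : Q * B = 0 := by
    rw [hQdef, Matrix.sub_mul, Matrix.one_mul, Matrix.mul_assoc, Matrix.mul_assoc,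
      ← hGdef, hGG', Matrix.mul_one, sub_self]
  have hQQ : Q * Q = Q := by
    nth_rewrite 2 [hQdef]
    rw [Matrix.mul_sub, Matrix.mul_one, ← Matrix.mul_assoc, ← Matrix.mul_assoc,
      hQB, Matrix.zero_mul, Matrix.zero_mul, sub_zero]
  have hCF : C * F = Q - B * (Bᵀ * (M⁻¹ * Q)) := by
    have hCCt : C * Cᵀ = M - B * Bᵀ := by rw [hsplit, add_sub_cancel_left]
    calc C * F = (C * Cᵀ) * (M⁻¹ * Q) := by
          rw [hFdef]; simp only [Matrix.mul_assoc]
      _ = M * (M⁻¹ * Q) - (B * Bᵀ) * (M⁻¹ * Q) := by rw [hCCt, Matrix.sub_mul]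
      _ = Q - B * (Bᵀ * (M⁻¹ * Q)) := by
          rw [← Matrix.mul_assoc M, hMM, Matrix.one_mul, Matrix.mul_assoc]
  have hECF : E * (C * F) = 0 := by
    have t1 : G⁻¹ * Bᵀ * Q = 0 := by rw [Matrix.mul_assoc, hBQ, Matrix.mul_zero]
    have t2 : G⁻¹ * Bᵀ * (B * (Bᵀ * (M⁻¹ * Q))) = Bᵀ * M⁻¹ * Q := by
      rw [Matrix.mul_assoc G⁻¹ Bᵀ, ← Matrix.mul_assoc Bᵀ B, ← hGdef, ← Matrix.mul_assoc,
        hGG', Matrix.one_mul, Matrix.mul_assoc]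
    have t3 : Bᵀ * M⁻¹ * Q * Q = Bᵀ * M⁻¹ * Q := by rw [Matrix.mul_assoc, hQQ]
    have t4 : Bᵀ * M⁻¹ * Q * (B * (Bᵀ * (M⁻¹ * Q))) = 0 := by
      rw [Matrix.mul_assoc (Bᵀ * M⁻¹) Q, ← Matrix.mul_assoc Q B, hQB, Matrix.zero_mul,
        Matrix.mul_zero]
    rw [hCF, hEdef, Matrix.add_mul, Matrix.mul_sub, Matrix.mul_sub, t1, t2, t3, t4]
    abel
  have hQCF : Q * (C * F) = Q := by
    rw [hCF, Matrix.mul_sub, ← Matrix.mul_assoc Q B, hQB, Matrix.zero_mul, sub_zero, hQQ]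
  have hFCFC : (F * C) * (F * C) = F * C := by
    calc (F * C) * (F * C) = Cᵀ * (M⁻¹ * ((Q * (C * F)) * C)) := by
          nth_rewrite 1 [hFdef]
          simp only [Matrix.mul_assoc]
      _ = F * C := by rw [hQCF, hFdef]; simp only [Matrix.mul_assoc]
  have hECFC : (E * C) * (F * C) = 0 := by
    calc (E * C) * (F * C) = E * (C * F) * C := by simp only [Matrix.mul_assoc]
      _ = 0 := by rw [hECF, Matrix.zero_mul]
  -- the one-step computation
  have step : ∀ k, j ≤ k →
      subv (x (k+1)) T = subv (x k) T + (E * C) *ᵥ subv (x k) Tᶜ ∧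
      subv (x (k+1)) Tᶜ = (F * C) *ᵥ subv (x k) Tᶜ := by
    intro k hk
    have hTk : Tk k = T := hT k hk
    have hu1' : ∀ i (hi : i ∈ T), u k i = x k i + fb A T (x k) ⟨i, hi⟩ := by
      have h := hu1 k
      rw [hTk] at h
      exact h
    have huT : subv (u k) T = subv (x k) T + (G⁻¹ * Bᵀ * C) *ᵥ subv (x k) Tᶜ := by
      funext i
      calc subv (u k) T i = x k i.1 + fb A T (x k) i := hu1' i.1 i.2
        _ = _ := by rw [hfb (x k)]; rfl
    have huTc : subv (u k) Tᶜ = 0 := by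
      funext i
      exact hu2 k i.1 (by rw [hTk]; exact Finset.mem_compl.mp i.2)
    have hsubT : subv (u k - x k) T = (G⁻¹ * Bᵀ * C) *ᵥ subv (x k) Tᶜ := by
      rw [subv_sub, huT]; abel
    have hsubTc : subv (u k - x k) Tᶜ = -(subv (x k) Tᶜ) := by
      rw [subv_sub, huTc]; abel
    have hAv : A *ᵥ (u k - x k) = -((Q * C) *ᵥ subv (x k) Tᶜ) := by
      rw [mulVec_split A T (u k - x k), hsubT, hsubTc, ← hB, ← hC, Matrix.mulVec_mulVec,
        Matrix.mulVec_neg]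
      have hm : Q * C = C - B * (G⁻¹ * Bᵀ * C) := by
        rw [hQdef, Matrix.sub_mul, Matrix.one_mul]
        simp only [Matrix.mul_assoc]
      rw [hm, Matrix.sub_mulVec, ← Matrix.mulVec_mulVec (subv (x k) Tᶜ) B (G⁻¹ * Bᵀ * C)]
      abel
    have hproj : x (k+1) = x k + (u k - x k) + Aᵀ *ᵥ ((M⁻¹ * (Q * C)) *ᵥ subv (x k) Tᶜ) := by
      rw [hx k, Matrix.sub_mulVec, Matrix.one_mulVec,
        show Aᵀ * M⁻¹ * A = Aᵀ * (M⁻¹ * A) from Matrix.mul_assoc Aᵀ M⁻¹ A,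
        ← Matrix.mulVec_mulVec (u k - x k) Aᵀ (M⁻¹ * A), ← Matrix.mulVec_mulVec (u k - x k) M⁻¹ A, hAv,
        Matrix.mulVec_neg, Matrix.mulVec_neg]
      simp only [Matrix.mulVec_mulVec, Matrix.mul_assoc]
      abel
    constructor
    · rw [hproj, subv_add, subv_add, hsubT, subv_transpose_mulVec, ← hB,
        Matrix.mulVec_mulVec]
      have he : E * C = G⁻¹ * Bᵀ * C + Bᵀ * (M⁻¹ * (Q * C)) := by
        rw [hEdef, Matrix.add_mul]; simp only [Matrix.mul_assoc]
      rw [he, Matrix.add_mulVec]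
      abel
    · rw [hproj, subv_add, subv_add, hsubTc, subv_transpose_mulVec, ← hC,
        Matrix.mulVec_mulVec]
      have he : F * C = Cᵀ * (M⁻¹ * (Q * C)) := by
        rw [hFdef]; simp only [Matrix.mul_assoc]
      rw [he]
      abel
  -- the limit function
  set f : Fin N → ℝ := fun i =>
      if hi : i ∈ T then
        x j i + ((E * C) *ᵥ subv (x j) Tᶜ) ⟨i, hi⟩
      else
        ((F * C) *ᵥ subv (x j) Tᶜ) ⟨i, Finset.mem_compl.mpr hi⟩ with hfdef
  have hfT : subv f T = subv (x j) T + (E * C) *ᵥ subv (x j) Tᶜ := by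
    funext i
    show f i.1 = _
    rw [hfdef]
    simp only [dif_pos i.2]
    rfl
  have hfTc : subv f Tᶜ = (F * C) *ᵥ subv (x j) Tᶜ := by
    funext i
    show f i.1 = _
    rw [hfdef]
    simp only [dif_neg (Finset.mem_compl.mp i.2)]
  show ∀ k, j + 1 ≤ k → x k = f
  intro k hk
  induction k with
  | zero => omega
  | succ m ih =>
    by_cases hm : j + 1 ≤ m
    · have hxm : x m = f := ih hm
      obtain ⟨h1, h2⟩ := step m (by omega)
      refine eq_of_subv_eq T _ _ ?_ ?_
      · rw [h1, hxm, hfT, hfTc, Matrix.mulVec_mulVec, hECFC, Matrix.zero_mulVec, add_zero]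
      · rw [h2, hxm, hfTc, Matrix.mulVec_mulVec, hFCFC]
    · have hmj : m = j := by omega
      subst hmj
      obtain ⟨h1, h2⟩ := step m le_rfl
      exact eq_of_subv_eq T _ _ (by rw [h1, hfT]) (by rw [h2, hfTc])
end

section
/- Let A ∈ ℝ^{n×N} be a Parseval frame and T ⊆ {1,…,N} with |T| < n such that A_T* A_T and A_{T^c} A_{T^c}* are invertible. Then the partial sums A_T* + A_T*(A_{T^c} A_{T^c}*) + … + A_T*(A_{T^c} A_{T^c}*)^k converge, as k → ∞, to (A_T* A_T)^{-1} A_T*. -/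
/-!
Write `M = A_T`, `C = A_{Tᶜ} A_{Tᶜ}*` and `G = M* M`. Parseval gives `M M* + C = 1`, hence
`M* C = (1 - G) M*`, and the `k`-th partial sum is `(∑_{l ≤ k} (1 - G)^l) M*`. As a column block
of the co-isometry `A`, `M` is a contraction, so `‖(1 - G) v‖² ≤ ‖v‖² - ‖M v‖²`; invertibility of
`G` bounds `M` below, `‖v‖ ≤ c ‖M v‖`, whence `‖1 - G‖ ≤ √(1 - c⁻²) < 1` in the operator norm and
the Neumann series `∑ (1 - G)^l` converges to `G⁻¹`.
-/

open Matrix Finset Filter Topology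

namespace ContinuousLinearMap

variable {𝕜 E F : Type*} [RCLike 𝕜] [NormedAddCommGroup E] [InnerProductSpace 𝕜 E]
  [CompleteSpace E] [NormedAddCommGroup F] [InnerProductSpace 𝕜 F] [CompleteSpace F]

open scoped InnerProduct

theorem norm_one_sub_adjoint_comp_self_lt_one {T : E →L[𝕜] F} (hT : ‖T‖ ≤ 1)
    (hG : IsUnit (T† ∘L T)) : ‖1 - T† ∘L T‖ < 1 := by
  obtain ⟨S, hS⟩ : ∃ S : E →L[𝕜] E, S * (T† ∘L T) = 1 := ⟨↑hG.unit⁻¹, hG.unit.inv_mul⟩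
  set c := max ‖S‖ 1
  have hc : 1 ≤ c := le_max_right _ _
  have hTadj : ‖T†‖ ≤ 1 := by rwa [adjoint.norm_map]
  have hbelow (v : E) : ‖v‖ ≤ c * ‖T v‖ :=
    calc ‖v‖ = ‖S ((T†) (T v))‖ := by simpa using congr(‖$hS v‖).symm
      _ ≤ ‖S‖ * (‖T†‖ * ‖T v‖) := (S.le_opNorm _).trans (by gcongr; exact (T†).le_opNorm _)
      _ ≤ c * ‖T v‖ := by
        have := norm_nonneg (T v)
        gcongr
        · exact le_max_left _ _
        · nlinarith
  set r := 1 - (c ^ 2)⁻¹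
  have hr : 0 ≤ r := sub_nonneg.2 (inv_le_one_of_one_le₀ (one_le_pow₀ hc))
  have hcontract (v : E) : ‖(1 - T† ∘L T) v‖ ^ 2 ≤ r * ‖v‖ ^ 2 := by
    have hGv : ‖(T†) (T v)‖ ≤ ‖T v‖ := (T†).le_of_opNorm_le hTadj _ |>.trans_eq (one_mul _)
    have hinner : RCLike.re (inner 𝕜 v ((T†) (T v))) = ‖T v‖ ^ 2 := by
      rw [adjoint_inner_right, inner_self_eq_norm_sq]
    have hv : ‖v‖ ^ 2 / c ^ 2 ≤ ‖T v‖ ^ 2 := by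
      rw [div_le_iff₀ (by positivity)]
      nlinarith [hbelow v, norm_nonneg v]
    rw [_root_.sub_apply, one_apply_eq_self, comp_apply, norm_sub_sq (𝕜 := 𝕜), hinner]
    have := norm_nonneg ((T†) (T v))
    calc _ ≤ ‖v‖ ^ 2 - ‖T v‖ ^ 2 := by nlinarith
      _ ≤ _ := by rw [sub_mul, one_mul, inv_mul_eq_div]; linarith
  calc ‖1 - T† ∘L T‖ ≤ √r := opNorm_le_bound _ (Real.sqrt_nonneg r) fun v ↦
        pow_le_pow_iff_left₀ (norm_nonneg _) (by positivity) two_ne_zero |>.1 <| by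
          rw [mul_pow, Real.sq_sqrt hr]; exact hcontract v
    _ < 1 := (Real.sqrt_lt' one_pos).2 (by rw [one_pow]; exact sub_lt_self 1 (by positivity))

end ContinuousLinearMap

namespace Matrix

section L2OpNorm

open scoped Matrix.Norms.L2Operator

variable {𝕜 l m k : Type*} [RCLike 𝕜] [Fintype l] [Fintype m] [Fintype k]
  [DecidableEq l] [DecidableEq k]

theorem l2_opNorm_le_one_of_conjTranspose_mul_self_eq_one {A : Matrix m k 𝕜} (h : Aᴴ * A = 1) :
    ‖A‖ ≤ 1 := by
  have : ‖A‖ * ‖A‖ ≤ 1 := by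
    rw [← l2_opNorm_conjTranspose_mul_self, h, cstar_norm_def, map_one]
    exact ContinuousLinearMap.norm_id_le
  nlinarith [norm_nonneg A]

theorem l2_opNorm_submatrix_id_le (A : Matrix m k 𝕜) {e : l → k} (he : Function.Injective e) :
    ‖A.submatrix id e‖ ≤ ‖A‖ := by
  set P := (1 : Matrix k k 𝕜).submatrix (Equiv.refl k) e
  have hP : Pᴴ * P = 1 := by
    rw [conjTranspose_submatrix, conjTranspose_one, mul_submatrix_one, submatrix_submatrix]
    simpa using submatrix_one e he
  calc ‖A.submatrix id e‖ = ‖A * P‖ := by rw [mul_submatrix_one]; rfl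
    _ ≤ ‖A‖ * ‖P‖ := l2_opNorm_mul A P
    _ ≤ ‖A‖ := mul_le_of_le_one_right (norm_nonneg A)
      (l2_opNorm_le_one_of_conjTranspose_mul_self_eq_one hP)

theorem l2_opNorm_le_one_of_mul_conjTranspose_add_mul_conjTranspose_eq_one {k' : Type*}
    [Fintype k'] [DecidableEq m] {M : Matrix m k 𝕜} {N : Matrix m k' 𝕜}
    (h : M * Mᴴ + N * Nᴴ = 1) : ‖M‖ ≤ 1 := by
  classical
  have hF : ‖fromCols M N‖ ≤ 1 := by
    rw [← l2_opNorm_conjTranspose]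
    refine l2_opNorm_le_one_of_conjTranspose_mul_self_eq_one ?_
    rwa [conjTranspose_conjTranspose, conjTranspose_fromCols_eq_fromRows_conjTranspose,
      fromCols_mul_fromRows]
  exact (l2_opNorm_submatrix_id_le (fromCols M N) Sum.inl_injective).trans hF

theorem l2_opNorm_one_sub_conjTranspose_mul_self_lt_one [DecidableEq m] {A : Matrix m k 𝕜}
    (hA : ‖A‖ ≤ 1) (hG : IsUnit (Aᴴ * A)) : ‖1 - Aᴴ * A‖ < 1 := by
  set L := (toEuclideanLin (𝕜 := 𝕜) (m := m) (n := k)).trans LinearMap.toContinuousLinearMap A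
  have hL : toEuclideanCLM (n := k) (𝕜 := 𝕜) (Aᴴ * A) = ContinuousLinearMap.adjoint L ∘L L := by
    ext1 x
    simp only [LinearEquiv.trans_apply, ← LinearMap.adjoint_toContinuousLinearMap,
      ← toEuclideanLin_conjTranspose_eq_adjoint, ContinuousLinearMap.comp_apply,
      LinearMap.coe_toContinuousLinearMap', L]
    ext i
    simp only [ofLp_toEuclideanCLM, toLpLin_apply, mulVec_mulVec]
  rw [cstar_norm_def, map_sub, map_one, hL]
  exact ContinuousLinearMap.norm_one_sub_adjoint_comp_self_lt_one hA (hL ▸ hG.map _)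

end L2OpNorm

theorem mul_pow_eq_pow_mul_of_mul_eq {R k m : Type*} [Semiring R] [Fintype k] [Fintype m]
    [DecidableEq k] [DecidableEq m] {X : Matrix k m R} {C : Matrix m m R} {D : Matrix k k R}
    (h : X * C = D * X) (l : ℕ) :
    X * C ^ l = D ^ l * X := by
  induction l with
  | zero => simp
  | succ l ih =>
    rw [pow_succ, ← Matrix.mul_assoc, ih, Matrix.mul_assoc, h, ← Matrix.mul_assoc, ← pow_succ]

end Matrix

theorem tendsto_sum_range_succ_pow_one_sub {R : Type*} [NormedRing R] [HasSummableGeomSeries R]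
    {g : R} (h : ‖1 - g‖ < 1) :
    Tendsto (fun j ↦ ∑ l ∈ range (j + 1), (1 - g) ^ l) atTop (𝓝 (Ring.inverse g)) := by
  have := (hasSum_geom_series_inverse _ h).tendsto_sum_nat.comp (tendsto_add_atTop_nat 1)
  rwa [sub_sub_cancel] at this

theorem tendsto_sum_transpose_mul_pow {m k k' : Type*} [Fintype m] [Fintype k] [Fintype k']
    [DecidableEq m] [DecidableEq k] {M : Matrix m k ℝ} {N : Matrix m k' ℝ}
    (h : M * Mᵀ + N * Nᵀ = 1) (hG : IsUnit (Mᵀ * M)) :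
    Tendsto (fun j ↦ ∑ l ∈ range (j + 1), Mᵀ * (N * Nᵀ) ^ l) atTop (𝓝 ((Mᵀ * M)⁻¹ * Mᵀ)) := by
  have hC : Mᵀ * (N * Nᵀ) = (1 - Mᵀ * M) * Mᵀ := by
    rw [eq_sub_of_add_eq' h, Matrix.mul_sub, Matrix.sub_mul, Matrix.mul_one, Matrix.one_mul,
      Matrix.mul_assoc]
  open scoped Matrix.Norms.L2Operator in
  have hlt : ‖1 - Mᵀ * M‖ < 1 := by
    simp only [← conjTranspose_eq_transpose_of_trivial] at h hG ⊢
    exact l2_opNorm_one_sub_conjTranspose_mul_self_lt_one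
      (l2_opNorm_le_one_of_mul_conjTranspose_add_mul_conjTranspose_eq_one h) hG
  have hgeom : Tendsto (fun j ↦ ∑ l ∈ range (j + 1), (1 - Mᵀ * M) ^ l) atTop
      (𝓝 (Mᵀ * M)⁻¹) := by
    open scoped Matrix.Norms.L2Operator in
    simpa only [nonsing_inv_eq_ringInverse] using tendsto_sum_range_succ_pow_one_sub hlt
  simp_rw [mul_pow_eq_pow_mul_of_mul_eq hC, ← Matrix.sum_mul]
  exact ((continuous_id.matrix_mul continuous_const).tendsto _).comp hgeom

theorem cols_mul_transpose_add_cols_compl_mul_transpose {n N : ℕ} (A : Matrix (Fin n) (Fin N) ℝ)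
    (T : Finset (Fin N)) : cols A T * (cols A T)ᵀ + cols A Tᶜ * (cols A Tᶜ)ᵀ = A * Aᵀ := by
  ext i j
  simp only [Matrix.add_apply, mul_apply, cols, transpose_apply, of_apply]
  rw [Finset.sum_coe_sort T (fun c ↦ A i c * A j c),
    Finset.sum_coe_sort Tᶜ (fun c ↦ A i c * A j c), Finset.sum_add_sum_compl]

theorem stmt_9_general {n N : ℕ} (A : Matrix (Fin n) (Fin N) ℝ)
    (hParseval : A * Aᵀ = 1) (T : Finset (Fin N))
    (hgram : IsUnit ((cols A T)ᵀ * cols A T)) :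
    Filter.Tendsto
      (fun k => ∑ l ∈ Finset.range (k+1), (cols A T)ᵀ * (cols A Tᶜ * (cols A Tᶜ)ᵀ) ^ l)
      Filter.atTop (nhds (((cols A T)ᵀ * cols A T)⁻¹ * (cols A T)ᵀ)) :=
  tendsto_sum_transpose_mul_pow (cols_mul_transpose_add_cols_compl_mul_transpose A T ▸ hParseval)
    hgram

/-- the partial sums `A_T* + A_T*(A_{Tᶜ}A_{Tᶜ}*) + … + A_T*(A_{Tᶜ}A_{Tᶜ}*)^k`
converge to `(A_T* A_T)⁻¹ A_T*`. -/
theorem stmt_9 {n N : ℕ} (hnN : n < N) (A : Matrix (Fin n) (Fin N) ℝ)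
    (hParseval : A * Aᵀ = 1) (T : Finset (Fin N)) (hT : T.card < n)
    (hgram : IsUnit ((cols A T)ᵀ * cols A T))
    (hcompl : IsUnit (cols A Tᶜ * (cols A Tᶜ)ᵀ)) :
    Filter.Tendsto
      (fun k => ∑ l ∈ Finset.range (k+1), (cols A T)ᵀ * (cols A Tᶜ * (cols A Tᶜ)ᵀ) ^ l)
      Filter.atTop (nhds (((cols A T)ᵀ * cols A T)⁻¹ * (cols A T)ᵀ)) :=
  stmt_9_general A hParseval T hgram
end

section
/- Let A ∈ ℝ^{n×N}, let x ∈ ℝ^N and e ∈ ℝ^n with b = Ax + e, let x^♯ be a best s-term approximation of x supported on T^♯, and set ẽ = A(x − x^♯) + e. Let δ_s and δ_{2s} be RIP constants for A of orders s and 2s with δ_{2s} < 1. Let w ∈ ℝ^N satisfy Aw = b, let T_k ⊆ {1,…,N} with |T_k| = s and A_{T_k}* A_{T_k} invertible, and define u by u_{T_k} = w_{T_k} + (A_{T_k}* A_{T_k})^{-1} A_{T_k}* A_{T_k^c} w_{T_k^c} and u = 0 off T_k. Then, with T = T^♯ ∪ T_k, ‖u − x^♯‖₂ ≤ (1/(1−δ_{2s}))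 ‖x^♯_{T \ T_k}‖₂ + (√(1+δ_s)/(1−δ_{2s})) ‖ẽ‖₂. -/
open Matrix Finset Filter Topology

/-- Euclidean norm of a vector. -/
noncomputable def euclNorm {k : ℕ} (x : Fin k → ℝ) : ℝ := Real.sqrt (∑ i, x i ^ 2)

/-!
Write `h = u - x♯ = g + z` with `g` the part of `h` on `T_k` and `z = -x♯` off `T_k`. The
feedback step makes `u` solve the normal equations on `T_k`, i.e. `A_{T_k}* (A u - b) = 0`; since
`A u - b = A h - ẽ`, the vector `A g` is orthogonal to `A h - ẽ`. Hence
`‖A g‖² = ⟨A g, ẽ⟩ - ⟨A g, A z⟩`, and RIP bounds the three terms by `(1 - δ_{2s}) ‖g‖²`,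
`√(1 + δ_s) ‖g‖ ‖ẽ‖` and `δ_{2s} ‖g‖ ‖z‖` (restricted orthogonality of disjointly supported
vectors, via polarization). This gives `(1 - δ_{2s}) ‖g‖ ≤ δ_{2s} ‖z‖ + √(1 + δ_s) ‖ẽ‖`, and
`‖h‖ ≤ ‖g‖ + ‖z‖` with `‖z‖ = ‖x♯_{T \ T_k}‖` finishes the proof.
-/

def IsRIPConst {n N : ℕ} (A : Matrix (Fin n) (Fin N) ℝ) (s : ℕ) (δ : ℝ) : Prop :=
  ∀ z : Fin N → ℝ, IsSparse s z →
    (1 - δ) * euclNorm z ^ 2 ≤ euclNorm (A *ᵥ z) ^ 2 ∧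
      euclNorm (A *ᵥ z) ^ 2 ≤ (1 + δ) * euclNorm z ^ 2

section euclNorm

variable {k : ℕ}

lemma euclNorm_eq_norm (x : Fin k → ℝ) :
    euclNorm x = ‖(WithLp.toLp 2 x : EuclideanSpace ℝ (Fin k))‖ := by
  simp [euclNorm, EuclideanSpace.norm_eq]

lemma euclNorm_nonneg (x : Fin k → ℝ) : 0 ≤ euclNorm x := Real.sqrt_nonneg _

lemma euclNorm_sq (x : Fin k → ℝ) : euclNorm x ^ 2 = x ⬝ᵥ x := by
  rw [euclNorm, Real.sq_sqrt (by positivity)]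
  simp [dotProduct, sq]

lemma euclNorm_eq_zero {x : Fin k → ℝ} : euclNorm x = 0 ↔ x = 0 := by
  simp [euclNorm_eq_norm]

@[simp]
lemma euclNorm_zero : euclNorm (0 : Fin k → ℝ) = 0 := by
  simp [euclNorm]

lemma euclNorm_neg (x : Fin k → ℝ) : euclNorm (-x) = euclNorm x := by
  simp [euclNorm]

lemma euclNorm_smul (c : ℝ) (x : Fin k → ℝ) : euclNorm (c • x) = |c| * euclNorm x := by
  simp [euclNorm_eq_norm, WithLp.toLp_smul, norm_smul]

lemma euclNorm_add_le (x y : Fin k → ℝ) : euclNorm (x + y) ≤ euclNorm x + euclNorm y := by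
  simpa [euclNorm_eq_norm] using norm_add_le (WithLp.toLp 2 x) (WithLp.toLp 2 y)

lemma dotProduct_le_euclNorm_mul_euclNorm (x y : Fin k → ℝ) :
    x ⬝ᵥ y ≤ euclNorm x * euclNorm y :=
  Real.sum_mul_le_sqrt_mul_sqrt _ x y

end euclNorm

section IsSparse

variable {k s : ℕ}

lemma IsSparse.mono {t : ℕ} {v : Fin k → ℝ} (h : IsSparse s v) (hst : s ≤ t) :
    IsSparse t v :=
  h.trans hst

lemma IsSparse.of_support_subset {v : Fin k → ℝ} (T : Finset (Fin k)) (hT : T.card ≤ s)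
    (hv : ∀ i, v i ≠ 0 → i ∈ T) : IsSparse s v :=
  (card_le_card fun i hi => hv i (by simpa using hi)).trans hT

lemma IsSparse.smul_add_smul_of_disjoint {p q : Fin k → ℝ} (hpq : ∀ i, p i * q i = 0)
    (h : IsSparse s (p + q)) (a b : ℝ) : IsSparse s (a • p + b • q) := by
  refine (card_le_card fun i hi => ?_).trans h
  simp only [mem_filter, mem_univ, true_and, Pi.add_apply, Pi.smul_apply, smul_eq_mul] at hi ⊢
  rcases mul_eq_zero.mp (hpq i) with h0 | h0 <;> simp_all

end IsSparse

lemma mulVec_eq_cols_mulVec_of_support {n N : ℕ} (A : Matrix (Fin n) (Fin N) ℝ)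
    {T : Finset (Fin N)} {v : Fin N → ℝ} (hv : ∀ i ∉ T, v i = 0) :
    A *ᵥ v = cols A T *ᵥ subv v T := by
  funext r
  simp only [mulVec, dotProduct, cols, subv, of_apply]
  rw [sum_coe_sort T fun c => A r c * v c]
  exact (sum_subset (subset_univ T) fun i _ hi => by simp [hv i hi]).symm

lemma cols_transpose_mulVec_eq_of_feedback {n N : ℕ} {A : Matrix (Fin n) (Fin N) ℝ}
    {T : Finset (Fin N)} (hG : IsUnit ((cols A T)ᵀ * cols A T)) {w u : Fin N → ℝ}
    (hu₁ : ∀ i, ∀ hi : i ∈ T, u i = w i + fb A T w ⟨i, hi⟩) (hu₂ : ∀ i ∉ T, u i = 0) :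
    (cols A T)ᵀ *ᵥ (A *ᵥ u) = (cols A T)ᵀ *ᵥ (A *ᵥ w) := by
  have hsubv : subv u T = subv w T + fb A T w := funext fun i => hu₁ i.1 i.2
  have hsplit : A *ᵥ w = cols A T *ᵥ subv w T + cols A Tᶜ *ᵥ subv w Tᶜ := by
    funext r
    simp only [mulVec, dotProduct, cols, subv, of_apply, Pi.add_apply]
    rw [sum_coe_sort T fun c => A r c * w c, sum_coe_sort Tᶜ fun c => A r c * w c,
      sum_add_sum_compl]
  rw [mulVec_eq_cols_mulVec_of_support A hu₂, hsubv, hsplit, fb, mulVec_add, mulVec_add,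
    mulVec_mulVec, mulVec_mulVec, mulVec_mulVec,
    mul_nonsing_inv _ ((isUnit_iff_isUnit_det _).mp hG), one_mulVec, mulVec_add, mulVec_mulVec,
    mulVec_mulVec]

namespace IsRIPConst

variable {n N s : ℕ} {A : Matrix (Fin n) (Fin N) ℝ}

lemma euclNorm_mulVec_le {δ : ℝ} (hA : IsRIPConst A s δ) {z : Fin N → ℝ} (hz : IsSparse s z) :
    euclNorm (A *ᵥ z) ≤ √(1 + δ) * euclNorm z := by
  calc euclNorm (A *ᵥ z) = √(euclNorm (A *ᵥ z) ^ 2) := (Real.sqrt_sq (euclNorm_nonneg _)).symm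
    _ ≤ √((1 + δ) * euclNorm z ^ 2) := Real.sqrt_le_sqrt (hA z hz).2
    _ = √(1 + δ) * euclNorm z := by
      rw [Real.sqrt_mul' _ (sq_nonneg _), Real.sqrt_sq (euclNorm_nonneg _)]

lemma dotProduct_mulVec_le_half {δ : ℝ} (hA : IsRIPConst A s δ) {p q : Fin N → ℝ}
    (hpq : ∀ i, p i * q i = 0) (hsp : IsSparse s (p + q)) :
    (A *ᵥ p) ⬝ᵥ (A *ᵥ q) ≤ δ * (euclNorm p ^ 2 + euclNorm q ^ 2) / 2 := by
  have hdot : p ⬝ᵥ q = 0 := sum_eq_zero fun i _ => hpq i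
  have hsub : IsSparse s (p - q) := by
    simpa [sub_eq_add_neg] using hsp.smul_add_smul_of_disjoint hpq 1 (-1)
  have hplus := (hA _ hsp).2
  have hminus := (hA _ hsub).1
  simp only [euclNorm_sq, mulVec_add, mulVec_sub, add_dotProduct, dotProduct_add,
    sub_dotProduct, dotProduct_sub, dotProduct_comm q p, dotProduct_comm (A *ᵥ q) (A *ᵥ p),
    hdot] at hplus hminus ⊢
  linarith

lemma dotProduct_mulVec_le {δ : ℝ} (hA : IsRIPConst A s δ) {p q : Fin N → ℝ}
    (hpq : ∀ i, p i * q i = 0) (hsp : IsSparse s (p + q)) :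
    (A *ᵥ p) ⬝ᵥ (A *ᵥ q) ≤ δ * euclNorm p * euclNorm q := by
  rcases (mul_nonneg (euclNorm_nonneg p) (euclNorm_nonneg q)).eq_or_lt with h0 | hpos
  · rcases mul_eq_zero.mp h0.symm with hp | hq
    · simp [euclNorm_eq_zero.mp hp]
    · simp [euclNorm_eq_zero.mp hq]
  -- balance the two sides by scaling `p` with `‖q‖` and `q` with `‖p‖`
  have key := hA.dotProduct_mulVec_le_half (p := euclNorm q • p) (q := euclNorm p • q)
    (fun i => by
      simp only [Pi.smul_apply, smul_eq_mul]
      linear_combination (euclNorm q * euclNorm p) * hpq i)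
    (hsp.smul_add_smul_of_disjoint hpq _ _)
  simp only [mulVec_smul, smul_dotProduct, dotProduct_smul, euclNorm_smul, smul_eq_mul,
    abs_of_nonneg (euclNorm_nonneg _)] at key
  nlinarith

variable {δ₁ δ₂ : ℝ}

lemma one_sub_mul_euclNorm_le_of_orthogonal (hA₁ : IsRIPConst A s δ₁)
    (hA₂ : IsRIPConst A (2 * s) δ₂) (hδ₂ : 0 ≤ δ₂) {g z : Fin N → ℝ} {e : Fin n → ℝ}
    (hg : IsSparse s g) (hgz : ∀ i, g i * z i = 0) (hsp : IsSparse (2 * s) (g + z))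
    (horth : (A *ᵥ g) ⬝ᵥ (A *ᵥ (g + z) - e) = 0) :
    (1 - δ₂) * euclNorm g ≤ δ₂ * euclNorm z + √(1 + δ₁) * euclNorm e := by
  have hlow := (hA₂ g (hg.mono (by omega))).1
  have hcs : (A *ᵥ g) ⬝ᵥ e ≤ √(1 + δ₁) * euclNorm g * euclNorm e :=
    (dotProduct_le_euclNorm_mul_euclNorm _ _).trans
      (mul_le_mul_of_nonneg_right (hA₁.euclNorm_mulVec_le hg) (euclNorm_nonneg e))
  have hcross : (A *ᵥ g) ⬝ᵥ (A *ᵥ (-z)) ≤ δ₂ * euclNorm g * euclNorm z := by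
    simpa [euclNorm_neg] using hA₂.dotProduct_mulVec_le (p := g) (q := -z)
      (fun i => by simp [hgz i])
      (by simpa [sub_eq_add_neg] using hsp.smul_add_smul_of_disjoint hgz 1 (-1))
  rw [mulVec_add, dotProduct_sub, dotProduct_add] at horth
  rw [mulVec_neg, dotProduct_neg] at hcross
  rw [euclNorm_sq (A *ᵥ g)] at hlow
  rcases (euclNorm_nonneg g).eq_or_lt with h0 | hpos
  · rw [← h0, mul_zero]
    exact add_nonneg (mul_nonneg hδ₂ (euclNorm_nonneg z))
      (mul_nonneg (Real.sqrt_nonneg _) (euclNorm_nonneg e))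
  · refine le_of_mul_le_mul_right ?_ hpos
    nlinarith

lemma one_sub_mul_euclNorm_le_of_cols_orthogonal (hA₁ : IsRIPConst A s δ₁)
    (hA₂ : IsRIPConst A (2 * s) δ₂) (hδ₂ : 0 ≤ δ₂) (hδ₂' : δ₂ ≤ 1) {T : Finset (Fin N)}
    (hT : T.card ≤ s) {h : Fin N → ℝ} (hh : IsSparse (2 * s) h) {e : Fin n → ℝ}
    (horth : (cols A T)ᵀ *ᵥ (A *ᵥ h - e) = 0) :
    (1 - δ₂) * euclNorm h ≤
      euclNorm (fun i => if i ∈ T then 0 else h i) + √(1 + δ₁) * euclNorm e := by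
  set g : Fin N → ℝ := fun i => if i ∈ T then h i else 0
  set z : Fin N → ℝ := fun i => if i ∈ T then 0 else h i
  have hgz : g + z = h := by
    funext i
    by_cases hi : i ∈ T <;> simp [g, z, hi]
  have hdisj : ∀ i, g i * z i = 0 := fun i => by by_cases hi : i ∈ T <;> simp [g, z, hi]
  have hg : IsSparse s g := IsSparse.of_support_subset T hT fun i hi => by
    by_contra hiT
    simp [g, hiT] at hi
  have horth_g : (A *ᵥ g) ⬝ᵥ (A *ᵥ (g + z) - e) = 0 := by
    rw [mulVec_eq_cols_mulVec_of_support A (v := g) (fun i hi => if_neg hi), dotProduct_comm,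
      dotProduct_mulVec, ← mulVec_transpose, hgz, horth, zero_dotProduct]
  have hgle := one_sub_mul_euclNorm_le_of_orthogonal hA₁ hA₂ hδ₂ hg hdisj (hgz ▸ hh) horth_g
  calc (1 - δ₂) * euclNorm h ≤ (1 - δ₂) * (euclNorm g + euclNorm z) := by
        rw [← hgz]
        exact mul_le_mul_of_nonneg_left (euclNorm_add_le g z) (by linarith)
    _ ≤ euclNorm z + √(1 + δ₁) * euclNorm e := by linarith

end IsRIPConst

theorem stmt_18_general {n N s : ℕ} (A : Matrix (Fin n) (Fin N) ℝ)
    (x : Fin N → ℝ) (e b : Fin n → ℝ) (hb : b = A *ᵥ x + e)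
    (xs : Fin N → ℝ) (hxs : IsSparse s xs)
    (Ts : Finset (Fin N)) (hsupp : ∀ i ∉ Ts, xs i = 0)
    (et : Fin n → ℝ) (het : et = A *ᵥ (x - xs) + e)
    (δ₁ δ₂ : ℝ) (hδ₂0 : 0 ≤ δ₂) (hδ₂1 : δ₂ < 1)
    (hRIP1 : ∀ z : Fin N → ℝ, IsSparse s z →
      (1 - δ₁) * euclNorm z ^ 2 ≤ euclNorm (A *ᵥ z) ^ 2 ∧
        euclNorm (A *ᵥ z) ^ 2 ≤ (1 + δ₁) * euclNorm z ^ 2)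
    (hRIP2 : ∀ z : Fin N → ℝ, IsSparse (2*s) z →
      (1 - δ₂) * euclNorm z ^ 2 ≤ euclNorm (A *ᵥ z) ^ 2 ∧
        euclNorm (A *ᵥ z) ^ 2 ≤ (1 + δ₂) * euclNorm z ^ 2)
    (w : Fin N → ℝ) (hw : A *ᵥ w = b)
    (Tk : Finset (Fin N)) (hTk : Tk.card = s)
    (hgram : IsUnit ((cols A Tk)ᵀ * cols A Tk))
    (u : Fin N → ℝ)
    (hu1 : ∀ i, ∀ hi : i ∈ Tk, u i = w i + fb A Tk w ⟨i, hi⟩)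
    (hu2 : ∀ i ∉ Tk, u i = 0) :
    euclNorm (u - xs) ≤
      (1 / (1 - δ₂)) * euclNorm (fun i => if i ∈ (Ts ∪ Tk) \ Tk then xs i else 0) +
        (Real.sqrt (1 + δ₁) / (1 - δ₂)) * euclNorm et := by
  have hsparse : IsSparse (2 * s) (u - xs) := by
    refine IsSparse.of_support_subset (Tk ∪ univ.filter (xs · ≠ 0))
      ((card_union_le _ _).trans (by rw [two_mul, hTk]; exact Nat.add_le_add_left hxs s))
      fun i hi => ?_
    by_cases hik : i ∈ Tk
    · exact mem_union_left _ hik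
    · simp_all
  have hAw : A *ᵥ w = A *ᵥ xs + et := by
    rw [hw, hb, het, mulVec_sub]
    abel
  have horth : (cols A Tk)ᵀ *ᵥ (A *ᵥ (u - xs) - et) = 0 := by
    rw [show A *ᵥ (u - xs) - et = A *ᵥ u - A *ᵥ w by rw [hAw, mulVec_sub]; abel, mulVec_sub,
      cols_transpose_mulVec_eq_of_feedback hgram hu1 hu2, sub_self]
  have htail : (fun i => if i ∈ Tk then 0 else (u - xs) i) =
      -fun i => if i ∈ (Ts ∪ Tk) \ Tk then xs i else 0 := by
    funext i
    by_cases hik : i ∈ Tk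
    · simp [hik]
    · by_cases hit : i ∈ Ts <;> simp [hik, hit, hu2, hsupp]
  have key := IsRIPConst.one_sub_mul_euclNorm_le_of_cols_orthogonal (A := A) hRIP1 hRIP2 hδ₂0
    hδ₂1.le hTk.le hsparse horth
  rw [htail, euclNorm_neg] at key
  rw [div_mul_eq_mul_div, div_mul_eq_mul_div, ← add_div, le_div_iff₀ (by linarith)]
  linarith

/-- single-step NST+HT+FB estimate
`‖u − x♯‖₂ ≤ ‖x♯_{T∖T_k}‖₂/(1−δ_{2s}) + √(1+δ_s)‖ẽ‖₂/(1−δ_{2s})` with `T = T♯ ∪ T_k`. -/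
theorem stmt_18 {n N s : ℕ} (hnN : n < N) (A : Matrix (Fin n) (Fin N) ℝ)
    (x : Fin N → ℝ) (e b : Fin n → ℝ) (hb : b = A *ᵥ x + e)
    (xs : Fin N → ℝ) (hxs : IsSparse s xs)
    (hbest : ∀ z : Fin N → ℝ, IsSparse s z → euclNorm (xs - x) ≤ euclNorm (z - x))
    (Ts : Finset (Fin N)) (hsupp : ∀ i ∉ Ts, xs i = 0)
    (et : Fin n → ℝ) (het : et = A *ᵥ (x - xs) + e)
    (δ₁ δ₂ : ℝ) (hδ₁0 : 0 ≤ δ₁) (hδ₂0 : 0 ≤ δ₂) (hδ₂1 : δ₂ < 1)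
    (hRIP1 : ∀ z : Fin N → ℝ, IsSparse s z →
      (1 - δ₁) * euclNorm z ^ 2 ≤ euclNorm (A *ᵥ z) ^ 2 ∧
        euclNorm (A *ᵥ z) ^ 2 ≤ (1 + δ₁) * euclNorm z ^ 2)
    (hRIP2 : ∀ z : Fin N → ℝ, IsSparse (2*s) z →
      (1 - δ₂) * euclNorm z ^ 2 ≤ euclNorm (A *ᵥ z) ^ 2 ∧
        euclNorm (A *ᵥ z) ^ 2 ≤ (1 + δ₂) * euclNorm z ^ 2)
    (w : Fin N → ℝ) (hw : A *ᵥ w = b)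
    (Tk : Finset (Fin N)) (hTk : Tk.card = s)
    (hgram : IsUnit ((cols A Tk)ᵀ * cols A Tk))
    (u : Fin N → ℝ)
    (hu1 : ∀ i, ∀ hi : i ∈ Tk, u i = w i + fb A Tk w ⟨i, hi⟩)
    (hu2 : ∀ i ∉ Tk, u i = 0) :
    euclNorm (u - xs) ≤
      (1 / (1 - δ₂)) * euclNorm (fun i => if i ∈ (Ts ∪ Tk) \ Tk then xs i else 0) +
        (Real.sqrt (1 + δ₁) / (1 - δ₂)) * euclNorm et :=
  stmt_18_general A x e b hb xs hxs Ts hsupp et het δ₁ δ₂ hδ₂0 hδ₂1 hRIP1 hRIP2 w hw Tk hTk hgram u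
    hu1 hu2
end
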